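/- arXiv:0805.0380 — 2 statements merged into one kernel-verified Lean document; each statement's English description precedes it below -/
import Mathlib

section
/- There exists a universal constant c > 0 such that for every function u : V* → ℝ with u(a₀) = 0 and E(u,u) := sup_n E_n(u,u) < +∞, one has sup_{x∈V*} |u(x)| ≤ c · E(u,u)^{1/2}. -/
open scoped Classical
open Real Set

noncomputable section

abbrev Pt : Type := ℝ × ℝ

/-- The three corners of the unit triangle. -/
def sierA : Fin 3 → Pt
  | 0 => (0, 0)
  | 1 => (1 / 2, Real.sqrt 3 / 2)
  | 2 => (1, 0)

/-- The three contractions `φᵢ(x) = (x + aᵢ)/2`. -/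
def ctr (i : Fin 3) (x : Pt) : Pt :=
  ((x.1 + (sierA i).1) / 2, (x.2 + (sierA i).2) / 2)

/-- The vertex sets `V n`. -/
def V : ℕ → Finset Pt
  | 0 => {sierA 0, sierA 1, sierA 2}
  | n + 1 => (V n).image (ctr 0) ∪ (V n).image (ctr 1) ∪ (V n).image (ctr 2)

/-- The (ordered) edge sets: `(x, y) ∈ Ed n` iff `{x,y} ∈ E_n`; each undirected
edge appears with both orientations. -/
def Ed : ℕ → Finset (Pt × Pt)
  | 0 => (V 0 ×ˢ V 0).filter fun p => p.1 ≠ p.2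
  | n + 1 => Finset.univ.biUnion fun i : Fin 3 => (Ed n).image fun p => (ctr i p.1, ctr i p.2)

/-- `V* = ⋃ n, V n`. -/
def Vstar : Set Pt := ⋃ n, (V n : Set Pt)

/-- The level-`n` energy `E_n(u,u) = (5/3)^n Σ_{{x,y} ∈ E_n} (u y - u x)²`
(each undirected edge counted once, whence the division by 2). -/
def En (n : ℕ) (u : Pt → ℝ) : ℝ :=
  (5 / 3 : ℝ) ^ n * (∑ p ∈ Ed n, (u p.2 - u p.1) ^ 2) / 2

/-- The discrete Laplacian `Δ_n u (x) = 5^n Σ_{y ∼ₙ x} (u y - u x)`. -/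
def lap (n : ℕ) (u : Pt → ℝ) (x : Pt) : ℝ :=
  (5 : ℝ) ^ n * ∑ p ∈ (Ed n).filter (fun p => p.1 = x), (u p.2 - u p.1)

/-! Every vertex of `V (n + 1)` is a vertex of `V n` or the endpoint of a level-`(n + 1)` edge
starting in `V n`, and by the energy bound such an edge carries an increment of `u` of size
`O(√(3/5) ^ n)`. Chaining these increments from `a₀` bounds `|u|` on `V n` by a geometric sum,
uniformly in `n`. -/

lemma sierA_mem_V_zero (i : Fin 3) : sierA i ∈ V 0 := by
  fin_cases i <;> simp [V]

lemma sierA_injective : Function.Injective sierA := by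
  have h3 : √3 ≠ 0 := by positivity
  intro i j h
  fin_cases i <;> fin_cases j <;> simp_all [sierA, Prod.ext_iff]

lemma ctr_sierA_self (i : Fin 3) : ctr i (sierA i) = sierA i := by
  simp only [ctr, Prod.ext_iff]
  constructor <;> ring

lemma ctr_mem_V_succ {n : ℕ} (i : Fin 3) {z : Pt} (hz : z ∈ V n) : ctr i z ∈ V (n + 1) := by
  simp only [V, Finset.mem_union, Finset.mem_image]
  fin_cases i
  exacts [Or.inl (Or.inl ⟨z, hz, rfl⟩), Or.inl (Or.inr ⟨z, hz, rfl⟩), Or.inr ⟨z, hz, rfl⟩]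

lemma exists_ctr_of_mem_V_succ {n : ℕ} {x : Pt} (hx : x ∈ V (n + 1)) :
    ∃ i, ∃ z ∈ V n, x = ctr i z := by
  simp only [V, Finset.mem_union, Finset.mem_image] at hx
  rcases hx with (⟨z, hz, rfl⟩ | ⟨z, hz, rfl⟩) | ⟨z, hz, rfl⟩
  exacts [⟨0, z, hz, rfl⟩, ⟨1, z, hz, rfl⟩, ⟨2, z, hz, rfl⟩]

lemma sierA_mem_Ed_zero {i j : Fin 3} (h : i ≠ j) : (sierA i, sierA j) ∈ Ed 0 := by
  simp only [Ed, Finset.mem_filter, Finset.mem_product]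
  exact ⟨⟨sierA_mem_V_zero i, sierA_mem_V_zero j⟩, sierA_injective.ne h⟩

lemma ctr_mem_Ed_succ {n : ℕ} (i : Fin 3) {p : Pt × Pt} (hp : p ∈ Ed n) :
    (ctr i p.1, ctr i p.2) ∈ Ed (n + 1) := by
  simp only [Ed, Finset.mem_biUnion, Finset.mem_univ, Finset.mem_image, true_and]
  exact ⟨i, p, hp, rfl⟩

lemma eq_or_mem_Ed_zero {x : Pt} (hx : x ∈ V 0) : x = sierA 0 ∨ (sierA 0, x) ∈ Ed 0 := by
  simp only [V, Finset.mem_insert, Finset.mem_singleton] at hx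
  rcases hx with rfl | rfl | rfl
  exacts [Or.inl rfl, Or.inr (sierA_mem_Ed_zero (by decide)),
    Or.inr (sierA_mem_Ed_zero (by decide))]

lemma exists_eq_or_mem_Ed_of_mem_V_succ (n : ℕ) {x : Pt} (hx : x ∈ V (n + 1)) :
    ∃ y ∈ V n, x = y ∨ (y, x) ∈ Ed (n + 1) := by
  induction n generalizing x with
  | zero =>
    obtain ⟨i, z, hz, rfl⟩ := exists_ctr_of_mem_V_succ hx
    obtain ⟨j, rfl⟩ : ∃ j, z = sierA j := by
      simp only [V, Finset.mem_insert, Finset.mem_singleton] at hz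
      rcases hz with h | h | h
      exacts [⟨0, h⟩, ⟨1, h⟩, ⟨2, h⟩]
    refine ⟨sierA i, sierA_mem_V_zero i, ?_⟩
    rcases eq_or_ne i j with rfl | hij
    · exact Or.inl (ctr_sierA_self i)
    · simpa only [ctr_sierA_self] using Or.inr (ctr_mem_Ed_succ i (sierA_mem_Ed_zero hij))
  | succ n ih =>
    obtain ⟨i, z, hz, rfl⟩ := exists_ctr_of_mem_V_succ hx
    obtain ⟨y, hy, hzy⟩ := ih hz
    refine ⟨ctr i y, ctr_mem_V_succ i hy, ?_⟩
    rcases hzy with rfl | hyz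
    exacts [Or.inl rfl, Or.inr (ctr_mem_Ed_succ i hyz)]

lemma En_nonneg (n : ℕ) (u : Pt → ℝ) : 0 ≤ En n u := by
  have := Finset.sum_nonneg fun (p : Pt × Pt) (_ : p ∈ Ed n) => sq_nonneg (u p.2 - u p.1)
  unfold En
  positivity

lemma sq_sub_le_of_mem_Ed (u : Pt → ℝ) {n : ℕ} {p : Pt × Pt} (hp : p ∈ Ed n) :
    (u p.2 - u p.1) ^ 2 ≤ 2 * (3 / 5) ^ n * En n u := by
  have hscale : (3 / 5 : ℝ) ^ n * (5 / 3) ^ n = 1 := by rw [← mul_pow]; norm_num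
  have hsum : 2 * (3 / 5 : ℝ) ^ n * En n u = ∑ q ∈ Ed n, (u q.2 - u q.1) ^ 2 := by
    rw [En]; linear_combination (∑ q ∈ Ed n, (u q.2 - u q.1) ^ 2) * hscale
  rw [hsum]
  exact Finset.single_le_sum (f := fun q : Pt × Pt => (u q.2 - u q.1) ^ 2)
    (fun q _ => sq_nonneg _) hp

lemma abs_sub_le_of_mem_Ed {u : Pt → ℝ} {S : ℝ} {n : ℕ} (hS : En n u ≤ S) {p : Pt × Pt}
    (hp : p ∈ Ed n) : |u p.2 - u p.1| ≤ √(2 * S) * √(3 / 5) ^ n := by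
  have hS0 : 0 ≤ S := (En_nonneg n u).trans hS
  refine abs_le_of_sq_le_sq ?_ (by positivity)
  rw [mul_pow, ← pow_mul, mul_comm n, pow_mul, Real.sq_sqrt (by positivity),
    Real.sq_sqrt (by norm_num)]
  nlinarith [sq_sub_le_of_mem_Ed u hp, pow_pos (show (0 : ℝ) < 3 / 5 by norm_num) n]

lemma abs_le_sum_of_exists_near {α : Type*} {s : ℕ → Set α} {u : α → ℝ} {a : ℕ → ℝ}
    (h0 : ∀ x ∈ s 0, |u x| ≤ a 0) (hstep : ∀ n, ∀ x ∈ s (n + 1), ∃ y ∈ s n, |u x - u y| ≤ a (n + 1))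
    (n : ℕ) {x : α} (hx : x ∈ s n) : |u x| ≤ ∑ k ∈ Finset.range (n + 1), a k := by
  induction n generalizing x with
  | zero => simpa using h0 x hx
  | succ n ih =>
    obtain ⟨y, hy, hxy⟩ := hstep n x hx
    rw [Finset.sum_range_succ]
    linarith [ih hy, abs_sub_abs_le_abs_sub (u x) (u y)]

lemma abs_le_geom_sum_of_mem_V {u : Pt → ℝ} (hu0 : u (sierA 0) = 0) {S : ℝ}
    (hS : ∀ n, En n u ≤ S) (n : ℕ) {x : Pt} (hx : x ∈ V n) :
    |u x| ≤ ∑ k ∈ Finset.range (n + 1), √(2 * S) * √(3 / 5) ^ k := by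
  have hedge n {p} (hp : p ∈ Ed n) := abs_sub_le_of_mem_Ed (hS n) hp
  refine abs_le_sum_of_exists_near (s := fun n => (V n : Set Pt)) ?_ ?_ n hx
  · intro y hy
    rcases eq_or_mem_Ed_zero hy with rfl | hy0
    · simp [hu0]
    · simpa [hu0] using hedge 0 hy0
  · intro n y hy
    obtain ⟨z, hz, hyz | hzy⟩ := exists_eq_or_mem_Ed_of_mem_V_succ n hy
    · exact ⟨z, hz, by rw [hyz, sub_self, abs_zero]; positivity⟩
    · exact ⟨z, hz, hedge (n + 1) hzy⟩

/-- Uniform bound: there is a universal constant `c > 0` such that every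
`u : V* → ℝ` with `u(a₀) = 0` and `E(u,u) = sup_n E_n(u,u) < ∞` satisfies
`sup_{x ∈ V*} |u x| ≤ c E(u,u)^{1/2}`. -/
theorem sup_bound_of_energy :
    ∃ c : ℝ, 0 < c ∧
      ∀ u : Pt → ℝ, u (sierA 0) = 0 → BddAbove (Set.range fun n => En n u) →
        ∀ x ∈ Vstar, |u x| ≤ c * Real.sqrt (sSup (Set.range fun n => En n u)) := by
  set r : ℝ := √(3 / 5)
  have hr0 : 0 < r := by positivity
  have hr1 : r < 1 := by rw [Real.sqrt_lt' one_pos]; norm_num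
  refine ⟨√2 / (1 - r), div_pos (by positivity) (sub_pos.2 hr1), fun u hu0 hbdd x hx => ?_⟩
  set S := sSup (Set.range fun n => En n u)
  have hS : ∀ n, En n u ≤ S := fun n => le_csSup hbdd ⟨n, rfl⟩
  obtain ⟨n, hn⟩ := Set.mem_iUnion.1 hx
  calc |u x| ≤ √(2 * S) * ∑ k ∈ Finset.range (n + 1), r ^ k := by
        rw [Finset.mul_sum]; exact abs_le_geom_sum_of_mem_V hu0 hS n hn
    _ ≤ √(2 * S) * (r ^ 0 / (1 - r)) := by
        gcongr
        rw [Finset.range_eq_Ico]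
        exact geom_sum_Ico_le_of_lt_one hr0.le hr1
    _ = √2 / (1 - r) * √S := by rw [pow_zero, Real.sqrt_mul zero_le_two]; ring

end
end

section
/- The Green functions satisfy the self-similar recursion: for every n ≥ 1, every i ∈ {0,1,2} and all x, y ∈ V_n, G_{n+1}(φ_i(x), φ_i(y)) = (3/5)·G_n(x,y) + Σ_{j=0,1,2} h_n^j(y) · G_{n+1}(φ_i(x), φ_i(a_j)), where h_n^j : V_n → ℝ is the unique function satisfying Δ_n h_n^j(z) = 0 for all z ∈ V_n∖V₀ and h_n^j(a_k) = δ_{jk} for k = 0,1,2. -/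
open scoped Classical
open Real Set

noncomputable section

/-- `g` is the level-`n` Green function with pole at `y`: it solves the
discrete Dirichlet problem `Δ_n g (y) = −3^n`, `Δ_n g (x) = 0` for
`x ∈ V_n ∖ (V₀ ∪ {y})`, and `g = 0` on `V₀ = {a₀,a₁,a₂}`. -/
def IsGreen (n : ℕ) (y : Pt) (g : Pt → ℝ) : Prop :=
  lap n g y = -(3 : ℝ) ^ n ∧
  (∀ x ∈ (V n : Set Pt), x ∉ (V 0 : Set Pt) → x ≠ y → lap n g x = 0) ∧
  ∀ i : Fin 3, g (sierA i) = 0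

/-- `G` is the full level-`n` Green function `G_n(x,y)`: for each pole
`y ∈ V_n ∖ V₀`, `G(·,y)` solves the discrete Dirichlet problem, and by
convention `G(·,y) = 0` for `y ∈ V₀`. -/
def IsGreenFamily (n : ℕ) (G : Pt → Pt → ℝ) : Prop :=
  (∀ y ∈ (V n : Set Pt), y ∉ (V 0 : Set Pt) → IsGreen n y (fun x => G x y)) ∧
  ∀ y ∈ (V 0 : Set Pt), ∀ x : Pt, G x y = 0

/-- `h j` is the level-`n` harmonic function with boundary values
`h_n^j(a_k) = δ_{jk}`. -/
def IsHarmBasis (n : ℕ) (h : Fin 3 → Pt → ℝ) : Prop :=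
  ∀ j : Fin 3,
    (∀ x ∈ (V n : Set Pt), x ∉ (V 0 : Set Pt) → lap n (h j) x = 0) ∧
    ∀ k : Fin 3, h j (sierA k) = if j = k then 1 else 0

/-!
The function `z ↦ G_{n+1}(φᵢ z, φᵢ x) − (3/5) G_n(z, x) − Σⱼ hⱼ(z) G_{n+1}(φᵢ aⱼ, φᵢ x)` on `V_n`
vanishes at the corners by the choice of the `hⱼ`. At a point `w ∈ V_n ∖ V₀` the edges of level
`n + 1` at `φᵢ w` are exactly the images under `φᵢ` of the level-`n` edges at `w`, so
`Δ_{n+1} v (φᵢ w) = 5 Δ_n (v ∘ φᵢ) (w)`; hence the two poles `−3^{n+1}/5` and `(3/5)(−3^n)` cancel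
and the function is harmonic. A harmonic function with zero boundary values has zero energy by the
discrete Gauss–Green formula, so it is constant along edges and vanishes since `V_n` is connected.
The symmetry `G(x, y) = G(y, x)`, again from Gauss–Green, puts the pole in the second argument.
-/

namespace Sierpinski

/-- Barycentric coordinates with respect to `a₀, a₁, a₂`, scaled to sum to `√3`. -/
def bary : Fin 3 → Pt → ℝ
  | 0, p => √3 * (1 - p.1) - p.2
  | 1, p => 2 * p.2
  | 2, p => √3 * p.1 - p.2

lemma bary_sierA (k m : Fin 3) : bary k (sierA m) = if k = m then √3 else 0 := by
  fin_cases k <;> fin_cases m <;> simp [bary, sierA] <;> ring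

lemma bary_sum (p : Pt) : bary 0 p + bary 1 p + bary 2 p = √3 := by
  simp only [bary]; ring

lemma bary_ctr (k i : Fin 3) (x : Pt) : bary k (ctr i x) = (bary k x + bary k (sierA i)) / 2 := by
  fin_cases k <;> simp [bary, ctr] <;> ring

lemma eq_of_bary_eq {p q : Pt} (h₁ : bary 1 p = bary 1 q) (h₂ : bary 2 p = bary 2 q) : p = q := by
  simp only [bary] at h₁ h₂
  have hs : (0 : ℝ) < √3 := by positivity
  refine Prod.ext ?_ (by linarith)
  exact mul_left_cancel₀ hs.ne' (by linarith)

lemma bary_le_sqrt {q : Pt} (hq : ∀ m, 0 ≤ bary m q) (k : Fin 3) : bary k q ≤ √3 := by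
  have := bary_sum q; have := hq 0; have := hq 1; have := hq 2
  fin_cases k <;> dsimp <;> linarith

lemma eq_sierA_of_bary_eq_sqrt {q : Pt} (hq : ∀ m, 0 ≤ bary m q) {k : Fin 3}
    (h : bary k q = √3) : q = sierA k := by
  have := bary_sum q; have := hq 0; have := hq 1; have := hq 2
  apply eq_of_bary_eq <;> rw [bary_sierA] <;> fin_cases k <;> simp at h ⊢ <;> linarith

/-- Two of the three cells meet only at their common corner. -/
lemma eq_sierA_of_ctr_eq_ctr {i j : Fin 3} (hij : i ≠ j) {x y : Pt}
    (hx : ∀ m, 0 ≤ bary m x) (hy : ∀ m, 0 ≤ bary m y) (h : ctr i x = ctr j y) :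
    x = sierA j ∧ y = sierA i := by
  have key (k : Fin 3) : bary k x + bary k (sierA i) = bary k y + bary k (sierA j) := by
    have := congrArg (bary k) h
    rw [bary_ctr, bary_ctr] at this
    linarith
  have hi := key i
  have hj := key j
  rw [bary_sierA, bary_sierA, if_pos rfl, if_neg hij] at hi
  rw [bary_sierA, bary_sierA, if_neg (Ne.symm hij), if_pos rfl] at hj
  have := hx i; have := hy j; have := bary_le_sqrt hx j; have := bary_le_sqrt hy i
  exact ⟨eq_sierA_of_bary_eq_sqrt hx (by linarith), eq_sierA_of_bary_eq_sqrt hy (by linarith)⟩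

lemma ctr_sierA_self (k : Fin 3) : ctr k (sierA k) = sierA k := by
  simp [ctr]

lemma ctr_injective (i : Fin 3) : Function.Injective (ctr i) := by
  intro p q h
  simp only [ctr, Prod.mk.injEq] at h
  exact Prod.ext (by linarith [h.1]) (by linarith [h.2])

lemma sierA_injective : Function.Injective sierA := by
  intro k m h
  by_contra hkm
  have := congrArg (bary k) h
  rw [bary_sierA, bary_sierA, if_pos rfl, if_neg hkm] at this
  exact (Real.sqrt_pos.mpr three_pos).ne' this

lemma mem_V_zero {x : Pt} : x ∈ V 0 ↔ ∃ k, sierA k = x := by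
  simp [V, Fin.exists_fin_succ, eq_comm]

lemma mem_V_succ {n : ℕ} {x : Pt} : x ∈ V (n + 1) ↔ ∃ i, ∃ z ∈ V n, ctr i z = x := by
  simp [V, Fin.exists_fin_succ]

lemma ctr_mem_V {n : ℕ} {z : Pt} (i : Fin 3) (hz : z ∈ V n) : ctr i z ∈ V (n + 1) :=
  mem_V_succ.mpr ⟨i, z, hz, rfl⟩

lemma sierA_mem_V (k : Fin 3) : ∀ n, sierA k ∈ V n
  | 0 => mem_V_zero.mpr ⟨k, rfl⟩
  | n + 1 => ctr_sierA_self k ▸ ctr_mem_V k (sierA_mem_V k n)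

lemma bary_nonneg_of_mem_V {n : ℕ} {x : Pt} (hx : x ∈ V n) (k : Fin 3) : 0 ≤ bary k x := by
  have corner (m : Fin 3) : 0 ≤ bary k (sierA m) := by
    rw [bary_sierA]; split_ifs <;> positivity
  induction n generalizing x with
  | zero =>
    obtain ⟨m, rfl⟩ := mem_V_zero.mp hx
    exact corner m
  | succ n ih =>
    obtain ⟨i, z, hz, rfl⟩ := mem_V_succ.mp hx
    rw [bary_ctr]
    linarith [ih hz, corner i]

lemma ctr_not_mem_V_zero {n : ℕ} {x : Pt} (i : Fin 3) (hx : x ∈ V n) (hx0 : x ∉ V 0) :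
    ctr i x ∉ V 0 := by
  intro hc
  obtain ⟨k, hk⟩ := mem_V_zero.mp hc
  rw [← ctr_sierA_self k] at hk
  rcases eq_or_ne i k with rfl | hik
  · exact hx0 (ctr_injective i hk ▸ sierA_mem_V i 0)
  · obtain ⟨rfl, -⟩ := eq_sierA_of_ctr_eq_ctr hik (bary_nonneg_of_mem_V hx)
      (bary_nonneg_of_mem_V (sierA_mem_V k n)) hk.symm
    exact hx0 (sierA_mem_V k 0)

lemma mem_Ed_zero {p : Pt × Pt} : p ∈ Ed 0 ↔ (p.1 ∈ V 0 ∧ p.2 ∈ V 0) ∧ p.1 ≠ p.2 := by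
  rw [Ed]; simp [Finset.mem_product]

lemma mem_Ed_succ {n : ℕ} {p : Pt × Pt} :
    p ∈ Ed (n + 1) ↔ ∃ i, ∃ q ∈ Ed n, (ctr i q.1, ctr i q.2) = p := by
  rw [Ed]; simp

lemma mem_V_of_mem_Ed {n : ℕ} {p : Pt × Pt} (hp : p ∈ Ed n) : p.1 ∈ V n ∧ p.2 ∈ V n := by
  induction n generalizing p with
  | zero =>
    simp only [mem_Ed_zero] at hp
    exact hp.1
  | succ n ih =>
    obtain ⟨i, q, hq, rfl⟩ := mem_Ed_succ.mp hp
    exact ⟨ctr_mem_V i (ih hq).1, ctr_mem_V i (ih hq).2⟩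

lemma swap_mem_Ed {n : ℕ} {p : Pt × Pt} (hp : p ∈ Ed n) : p.swap ∈ Ed n := by
  induction n generalizing p with
  | zero =>
    simp only [mem_Ed_zero] at hp ⊢
    exact ⟨hp.1.symm, Ne.symm hp.2⟩
  | succ n ih =>
    obtain ⟨i, q, hq, rfl⟩ := mem_Ed_succ.mp hp
    exact mem_Ed_succ.mpr ⟨i, q.swap, ih hq, rfl⟩

lemma sum_Ed_swap (n : ℕ) (F : Pt → Pt → ℝ) :
    ∑ p ∈ Ed n, F p.1 p.2 = ∑ p ∈ Ed n, F p.2 p.1 :=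
  Finset.sum_nbij' Prod.swap Prod.swap (fun _ => swap_mem_Ed) (fun _ => swap_mem_Ed)
    (fun _ _ => rfl) (fun _ _ => rfl) (fun _ _ => rfl)

lemma ctr_mem_Ed {n : ℕ} {q : Pt × Pt} (i : Fin 3) (hq : q ∈ Ed n) :
    (ctr i q.1, ctr i q.2) ∈ Ed (n + 1) :=
  mem_Ed_succ.mpr ⟨i, q, hq, rfl⟩

lemma sierA_mem_Ed_zero {k m : Fin 3} (hkm : k ≠ m) : (sierA k, sierA m) ∈ Ed 0 :=
  mem_Ed_zero.mpr ⟨⟨sierA_mem_V k 0, sierA_mem_V m 0⟩, sierA_injective.ne hkm⟩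

lemma filter_Ed_succ_ctr {n : ℕ} {x : Pt} (i : Fin 3) (hx : x ∈ V n) (hx0 : x ∉ V 0) :
    (Ed (n + 1)).filter (fun p => p.1 = ctr i x)
      = ((Ed n).filter (fun p => p.1 = x)).image (fun q => (ctr i q.1, ctr i q.2)) := by
  ext p
  simp only [Finset.mem_filter, Finset.mem_image]
  constructor
  · rintro ⟨hp, hp1⟩
    obtain ⟨j, q, hq, rfl⟩ := mem_Ed_succ.mp hp
    obtain rfl : j = i := by
      by_contra hji
      obtain ⟨-, rfl⟩ := eq_sierA_of_ctr_eq_ctr hji (bary_nonneg_of_mem_V (mem_V_of_mem_Ed hq).1)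
        (bary_nonneg_of_mem_V hx) hp1
      exact hx0 (sierA_mem_V j 0)
    exact ⟨q, ⟨hq, ctr_injective j hp1⟩, rfl⟩
  · rintro ⟨q, ⟨hq, rfl⟩, rfl⟩
    exact ⟨ctr_mem_Ed i hq, rfl⟩

lemma eq_of_forall_mem_Ed (n : ℕ) {u : Pt → ℝ} (hu : ∀ p ∈ Ed n, u p.1 = u p.2) :
    ∀ x ∈ V n, u x = u (sierA 0) := by
  induction n generalizing u with
  | zero =>
    intro x hx
    obtain ⟨k, rfl⟩ := mem_V_zero.mp hx
    rcases eq_or_ne k 0 with rfl | hk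
    · rfl
    · exact (hu _ (sierA_mem_Ed_zero (Ne.symm hk))).symm
  | succ n ih =>
    intro x hx
    obtain ⟨i, z, hz, rfl⟩ := mem_V_succ.mp hx
    have cell (j : Fin 3) : ∀ w ∈ V n, u (ctr j w) = u (ctr j (sierA 0)) :=
      ih fun q hq => hu _ (ctr_mem_Ed j hq)
    have corner (j : Fin 3) : ctr j (sierA 0) = ctr 0 (sierA j) := by
      fin_cases j <;> simp [ctr, sierA]
    rw [cell i z hz, corner, cell 0 _ (sierA_mem_V i n), ctr_sierA_self]

lemma lap_add (n : ℕ) (u v : Pt → ℝ) (x : Pt) : lap n (u + v) x = lap n u x + lap n v x := by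
  simp only [lap, Pi.add_apply, ← mul_add, ← Finset.sum_add_distrib]
  congr 1
  exact Finset.sum_congr rfl fun _ _ => by ring

lemma lap_sub (n : ℕ) (u v : Pt → ℝ) (x : Pt) : lap n (u - v) x = lap n u x - lap n v x := by
  simp only [lap, Pi.sub_apply, ← mul_sub, ← Finset.sum_sub_distrib]
  congr 1
  exact Finset.sum_congr rfl fun _ _ => by ring

lemma lap_smul (n : ℕ) (c : ℝ) (u : Pt → ℝ) (x : Pt) : lap n (c • u) x = c * lap n u x := by
  simp only [lap, Pi.smul_apply, smul_eq_mul, Finset.mul_sum]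
  exact Finset.sum_congr rfl fun _ _ => by ring

lemma lap_sum {ι : Type*} (n : ℕ) (s : Finset ι) (u : ι → Pt → ℝ) (x : Pt) :
    lap n (∑ j ∈ s, u j) x = ∑ j ∈ s, lap n (u j) x := by
  induction s using Finset.cons_induction with
  | empty => simp [lap]
  | cons j s hj ih => rw [Finset.sum_cons, Finset.sum_cons, lap_add, ih]

lemma lap_succ_ctr {n : ℕ} {x : Pt} (i : Fin 3) (hx : x ∈ V n) (hx0 : x ∉ V 0) (u : Pt → ℝ) :
    lap (n + 1) u (ctr i x) = 5 * lap n (u ∘ ctr i) x := by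
  have hinj : Function.Injective fun q : Pt × Pt => (ctr i q.1, ctr i q.2) :=
    fun p q h => Prod.ext (ctr_injective i (congrArg Prod.fst h))
      (ctr_injective i (congrArg Prod.snd h))
  rw [lap, lap, filter_Ed_succ_ctr i hx hx0, Finset.sum_image hinj.injOn, pow_succ]
  simp only [Function.comp_apply]
  ring

lemma sum_mul_lap_eq_sum_Ed (n : ℕ) (u v : Pt → ℝ) :
    ∑ x ∈ V n, u x * lap n v x = 5 ^ n * ∑ p ∈ Ed n, u p.1 * (v p.2 - v p.1) := by
  rw [Finset.mul_sum, ← Finset.sum_fiberwise_of_maps_to (g := Prod.fst)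
    (fun p hp => (mem_V_of_mem_Ed hp).1)]
  refine Finset.sum_congr rfl fun x _ => ?_
  rw [lap, mul_left_comm, Finset.mul_sum, Finset.mul_sum]
  refine Finset.sum_congr rfl fun p hp => ?_
  rw [(Finset.mem_filter.mp hp).2]

lemma sum_mul_lap (n : ℕ) (u v : Pt → ℝ) :
    ∑ x ∈ V n, u x * lap n v x
      = -(5 ^ n / 2) * ∑ p ∈ Ed n, (u p.2 - u p.1) * (v p.2 - v p.1) := by
  have hswap : ∑ p ∈ Ed n, u p.1 * (v p.2 - v p.1) = -∑ p ∈ Ed n, u p.2 * (v p.2 - v p.1) := by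
    rw [sum_Ed_swap n fun a b => u a * (v b - v a), ← Finset.sum_neg_distrib]
    exact Finset.sum_congr rfl fun _ _ => by ring
  have hsplit : ∑ p ∈ Ed n, (u p.2 - u p.1) * (v p.2 - v p.1)
      = ∑ p ∈ Ed n, u p.2 * (v p.2 - v p.1) - ∑ p ∈ Ed n, u p.1 * (v p.2 - v p.1) := by
    rw [← Finset.sum_sub_distrib]
    exact Finset.sum_congr rfl fun _ _ => by ring
  rw [sum_mul_lap_eq_sum_Ed, hsplit]
  linear_combination (5 : ℝ) ^ n / 2 * hswap

lemma sum_mul_lap_comm (n : ℕ) (u v : Pt → ℝ) :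
    ∑ x ∈ V n, u x * lap n v x = ∑ x ∈ V n, v x * lap n u x := by
  simp only [sum_mul_lap, mul_comm (u _ - u _)]

lemma eq_zero_of_lap_eq_zero {n : ℕ} {u : Pt → ℝ} (hb : ∀ k, u (sierA k) = 0)
    (hu : ∀ x ∈ V n, x ∉ V 0 → lap n u x = 0) : ∀ x ∈ V n, u x = 0 := by
  have hzero : ∑ x ∈ V n, u x * lap n u x = 0 := by
    refine Finset.sum_eq_zero fun x hx => ?_
    by_cases hx0 : x ∈ V 0
    · obtain ⟨k, rfl⟩ := mem_V_zero.mp hx0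
      rw [hb, zero_mul]
    · rw [hu x hx hx0, mul_zero]
  rw [sum_mul_lap, mul_eq_zero] at hzero
  have henergy : ∑ p ∈ Ed n, (u p.2 - u p.1) ^ 2 = 0 := by
    simpa [← sq, (by positivity : (5 : ℝ) ^ n / 2 ≠ 0)] using hzero
  have hedge (p) (hp : p ∈ Ed n) : u p.1 = u p.2 := by
    have := (Finset.sum_eq_zero_iff_of_nonneg fun p _ => sq_nonneg _).mp henergy p hp
    exact (sub_eq_zero.mp (pow_eq_zero_iff two_ne_zero |>.mp this)).symm
  intro x hx
  rw [eq_of_forall_mem_Ed n hedge x hx, hb]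

end Sierpinski

open Sierpinski

namespace IsGreenFamily

variable {n : ℕ} {G : Pt → Pt → ℝ}

lemma apply_sierA_eq_zero (hG : IsGreenFamily n G) (k : Fin 3) {y : Pt} (hy : y ∈ V n) :
    G (sierA k) y = 0 := by
  by_cases hy0 : y ∈ V 0
  · exact hG.2 y hy0 _
  · exact (hG.1 y hy hy0).2.2 k

lemma lap_eq_ite (hG : IsGreenFamily n G) {y w : Pt} (hy : y ∈ V n) (hw : w ∈ V n)
    (hw0 : w ∉ V 0) : lap n (fun z => G z y) w = if w = y then -(3 : ℝ) ^ n else 0 := by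
  by_cases hy0 : y ∈ V 0
  · have hwy : w ≠ y := fun h => hw0 (h ▸ hy0)
    have hGy : (fun z => G z y) = 0 := funext fun z => hG.2 y hy0 z
    rw [hGy, if_neg hwy]
    simp [lap]
  · have hGy := hG.1 y hy hy0
    split_ifs with hwy
    · exact hwy ▸ hGy.1
    · exact hGy.2.1 w hw hw0 hwy

lemma sum_mul_lap (hG : IsGreenFamily n G) {u : Pt → ℝ} (hu : ∀ k, u (sierA k) = 0)
    {y : Pt} (hy : y ∈ V n) : ∑ z ∈ V n, u z * lap n (fun z => G z y) z = -(3 : ℝ) ^ n * u y := by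
  have hterm (z) (hz : z ∈ V n) :
      u z * lap n (fun z => G z y) z = if z = y then -(3 : ℝ) ^ n * u y else 0 := by
    by_cases hz0 : z ∈ V 0
    · obtain ⟨k, rfl⟩ := mem_V_zero.mp hz0
      split_ifs with h
      · subst h; simp [hu]
      · simp [hu]
    · rw [hG.lap_eq_ite hy hz hz0]
      split_ifs with h <;> simp [h, mul_comm]
  rw [Finset.sum_congr rfl hterm, Finset.sum_ite_eq', if_pos hy]

lemma symm (hG : IsGreenFamily n G) {x y : Pt} (hx : x ∈ V n) (hy : y ∈ V n) :
    G x y = G y x := by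
  have h := sum_mul_lap_comm n (fun z => G z x) (fun z => G z y)
  rw [hG.sum_mul_lap (fun k => hG.apply_sierA_eq_zero k hx) hy,
    hG.sum_mul_lap (fun k => hG.apply_sierA_eq_zero k hy) hx] at h
  exact (mul_left_cancel₀ (neg_ne_zero.mpr (pow_ne_zero n three_ne_zero)) h).symm

lemma apply_ctr_ctr {Gs : Pt → Pt → ℝ} {h : Fin 3 → Pt → ℝ} (hG : IsGreenFamily n G)
    (hGs : IsGreenFamily (n + 1) Gs) (hh : IsHarmBasis n h) (i : Fin 3) {x z : Pt}
    (hx : x ∈ V n) (hz : z ∈ V n) :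
    Gs (ctr i z) (ctr i x)
      = 3 / 5 * G z x + ∑ j, h j z * Gs (ctr i (sierA j)) (ctr i x) := by
  set c : Fin 3 → ℝ := fun j => Gs (ctr i (sierA j)) (ctr i x)
  set u : Pt → ℝ := (fun w => Gs (ctr i w) (ctr i x))
    - ((3 / 5 : ℝ) • (fun w => G w x) + ∑ j, c j • h j) with hu
  suffices hu0 : u z = 0 by
    simpa [hu, sub_eq_zero, mul_comm (h _ z)] using hu0
  refine eq_zero_of_lap_eq_zero (fun k => ?_) (fun w hw hw0 => ?_) z hz
  · simp [hu, (hh _).2, hG.apply_sierA_eq_zero k hx, c]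
  · have hAw : lap n (fun w => Gs (ctr i w) (ctr i x)) w
        = (if w = x then -(3 : ℝ) ^ (n + 1) else 0) / 5 := by
      have hpole := hGs.lap_eq_ite (ctr_mem_V i hx) (ctr_mem_V i hw) (ctr_not_mem_V_zero i hw hw0)
      simp only [lap_succ_ctr i hw hw0, (ctr_injective i).eq_iff, Function.comp_def] at hpole
      rw [← hpole]
      ring
    have hhw (j : Fin 3) : lap n (h j) w = 0 := (hh j).1 w hw hw0
    rw [hu, lap_sub, lap_add, lap_smul, lap_sum, hAw, hG.lap_eq_ite hx hw hw0]
    simp only [lap_smul, hhw, mul_zero, Finset.sum_const_zero, add_zero]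
    split_ifs <;> ring

end IsGreenFamily

theorem green_self_similar_recursion_general (n : ℕ)
    (G Gs : Pt → Pt → ℝ) (h : Fin 3 → Pt → ℝ)
    (hG : IsGreenFamily n G) (hGs : IsGreenFamily (n + 1) Gs)
    (hh : IsHarmBasis n h) (i : Fin 3)
    (x : Pt) (hx : x ∈ (V n : Set Pt)) (y : Pt) (hy : y ∈ (V n : Set Pt)) :
    Gs (ctr i x) (ctr i y)
      = (3 / 5) * G x y + ∑ j : Fin 3, h j y * Gs (ctr i x) (ctr i (sierA j)) := by
  rw [hGs.symm (ctr_mem_V i hx) (ctr_mem_V i hy), hG.apply_ctr_ctr hGs hh i hx hy,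
    hG.symm hy hx]
  congr 1
  refine Finset.sum_congr rfl fun j _ => ?_
  rw [hGs.symm (ctr_mem_V i (sierA_mem_V j n)) (ctr_mem_V i hx)]

/-- Self-similar recursion for the Green functions:
`G_{n+1}(φᵢ x, φᵢ y) = (3/5) G_n(x,y) + Σⱼ h_n^j(y) G_{n+1}(φᵢ x, φᵢ aⱼ)`. -/
theorem green_self_similar_recursion (n : ℕ) (hn : 1 ≤ n)
    (G Gs : Pt → Pt → ℝ) (h : Fin 3 → Pt → ℝ)
    (hG : IsGreenFamily n G) (hGs : IsGreenFamily (n + 1) Gs)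
    (hh : IsHarmBasis n h) (i : Fin 3)
    (x : Pt) (hx : x ∈ (V n : Set Pt)) (y : Pt) (hy : y ∈ (V n : Set Pt)) :
    Gs (ctr i x) (ctr i y)
      = (3 / 5) * G x y + ∑ j : Fin 3, h j y * Gs (ctr i x) (ctr i (sierA j)) :=
  green_self_similar_recursion_general n G Gs h hG hGs hh i x hx y hy
end
end
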